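/- Argmin-preservation lemma for Markov chains: suppose X_1,…,X_n forms a Markov chain, K = {1}, and Y is generated by the sequential privacy mechanism. Then for every i, every a ∈ 𝒳, every 1 ≤ j ≤ i−1, and every history y_{[j]} occurring with positive probability: if u* minimizes u ↦ P(X_i = a | X_1 = u, Y_{[j−1]} = y_{[j−1]}) over all u with positive conditional probability, then u* also minimizes u ↦ P(X_i = a | X_1 = u, Y_{[j]} = y_{[j]}). In particular, for every such i and a, min_u P(X_i = a | X_1 = u) is attained at a value u* that also attains min_u P(X_i = a | X_1 = u, Y_{[i−1]} = y_{[i−1]}) for every positive-probability history y_{[i−1]}. -/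

import Mathlib

open Finset
open scoped Classical

noncomputable section

namespace GenotypeHiding

variable {X : Type} [Fintype X] [DecidableEq X]

/-- `y` agrees with the history `h` on all coordinates `j` with `j < t`
(i.e. the event `Y_{[t]} = h_{[t]}`, zero-based). -/
def agreeN {n : ℕ} (t : ℕ) (y h : Fin n → Option X) : Prop :=
  ∀ j : Fin n, (j : ℕ) < t → y j = h j

/-- `P(X = x, Y_{[t]} = h_{[t]})` under the joint law `J` of `(X, Y)`. -/
def prXH {n : ℕ} (J : (Fin n → X) → (Fin n → Option X) → ℝ) (t : ℕ)
    (x : Fin n → X) (h : Fin n → Option X) : ℝ :=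
  ∑ y : Fin n → Option X, if agreeN t y h then J x y else 0

/-- `P(Y_i = b, X = x, Y_{[t]} = h_{[t]})` under the joint law `J`. -/
def prXHY {n : ℕ} (J : (Fin n → X) → (Fin n → Option X) → ℝ) (t : ℕ)
    (x : Fin n → X) (h : Fin n → Option X) (i : Fin n) (b : Option X) : ℝ :=
  ∑ y : Fin n → Option X, if y i = b ∧ agreeN t y h then J x y else 0

/-- `P(Y_{[t]} = h_{[t]})` under the joint law `J`. -/
def prH {n : ℕ} (J : (Fin n → X) → (Fin n → Option X) → ℝ) (t : ℕ)
    (h : Fin n → Option X) : ℝ :=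
  ∑ x : Fin n → X, prXH J t x h

/-- `P(X_{i₀} = u, Y_{[t]} = h_{[t]})` under the joint law `J` (here `i₀` is the single
sensitive position). -/
def pr1H {n : ℕ} (J : (Fin n → X) → (Fin n → Option X) → ℝ) (i₀ : Fin n) (t : ℕ)
    (u : X) (h : Fin n → Option X) : ℝ :=
  ∑ x : Fin n → X, ∑ y : Fin n → Option X,
    if x i₀ = u ∧ agreeN t y h then J x y else 0

/-- `P(X_i = a, X_{i₀} = u, Y_{[t]} = h_{[t]})` under the joint law `J`. -/
def prI1H {n : ℕ} (J : (Fin n → X) → (Fin n → Option X) → ℝ) (i₀ : Fin n) (t : ℕ)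
    (i : Fin n) (a : X) (u : X) (h : Fin n → Option X) : ℝ :=
  ∑ x : Fin n → X, ∑ y : Fin n → Option X,
    if x i = a ∧ x i₀ = u ∧ agreeN t y h then J x y else 0

/-- `P(X_i = a | X_{i₀} = u, Y_{[t]} = h_{[t]})` under the joint law `J`. -/
def cond1 {n : ℕ} (J : (Fin n → X) → (Fin n → Option X) → ℝ) (i₀ : Fin n) (t : ℕ)
    (i : Fin n) (a : X) (u : X) (h : Fin n → Option X) : ℝ :=
  prI1H J i₀ t i a u h / pr1H J i₀ t u h

/-- `min_u P(X_i = a | X_{i₀} = u, Y_{[t]} = h_{[t]})`, the minimum being over all `u` with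
`P(X_{i₀} = u, Y_{[t]} = h_{[t]}) > 0`. -/
def minC1 {n : ℕ} (J : (Fin n → X) → (Fin n → Option X) → ℝ) (i₀ : Fin n) (t : ℕ)
    (i : Fin n) (a : X) (h : Fin n → Option X) : ℝ :=
  sInf {r : ℝ | ∃ u : X, 0 < pr1H J i₀ t u h ∧ r = cond1 J i₀ t i a u h}

/-- `J` is the joint law of `(X, Y)` where `Y` is generated from `X ∼ p` by the sequential
privacy mechanism with the single sensitive position `K = {i₀}`. -/
def IsSequentialMechanism1 {n : ℕ} (p : (Fin n → X) → ℝ) (i₀ : Fin n)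
    (J : (Fin n → X) → (Fin n → Option X) → ℝ) : Prop :=
  (∀ x y, 0 ≤ J x y) ∧
  (∀ x, ∑ y : Fin n → Option X, J x y = p x) ∧
  (∀ x y, 0 < J x y → ∀ i : Fin n, y i = some (x i) ∨ y i = none) ∧
  (∀ (i : Fin n) (x : Fin n → X) (h : Fin n → Option X), 0 < prXH J (i : ℕ) x h →
    prXHY J (i : ℕ) x h i (some (x i))
      = (minC1 J i₀ (i : ℕ) i (x i) h / cond1 J i₀ (i : ℕ) i (x i) (x i₀) h)
          * prXH J (i : ℕ) x h)

/-- `P(X_{[t]} = v_{[t]})`: the probability that the first `t` coordinates of `X` agree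
with `v`. -/
def prPre {n : ℕ} (p : (Fin n → X) → ℝ) (t : ℕ) (v : Fin n → X) : ℝ :=
  ∑ x : Fin n → X, if (∀ j : Fin n, (j : ℕ) < t → x j = v j) then p x else 0

/-- `P(X_i = a)`. -/
def prOne {n : ℕ} (p : (Fin n → X) → ℝ) (i : Fin n) (a : X) : ℝ :=
  ∑ x : Fin n → X, if x i = a then p x else 0

/-- `P(X_i = a ∧ X_{i'} = a')`. -/
def prTwo {n : ℕ} (p : (Fin n → X) → ℝ) (i i' : Fin n) (a a' : X) : ℝ :=
  ∑ x : Fin n → X, if x i = a ∧ x i' = a' then p x else 0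

/-- `X_1 → X_2 → ⋯ → X_n` is a Markov chain: for every `t`,
`P(X_{[t+2]}) ⋅ P(X_{t+1}) = P(X_{[t+1]}) ⋅ P(X_{t+1}, X_{t+2})` (zero-based indices),
which is the cross-multiplied form of the chain rule factorization. -/
def IsMarkov {n : ℕ} (p : (Fin n → X) → ℝ) : Prop :=
  ∀ (t : ℕ) (ht : t + 1 < n) (v : Fin n → X),
    prPre p (t + 2) v * prOne p ⟨t, by omega⟩ (v ⟨t, by omega⟩)
      = prPre p (t + 1) v
          * prTwo p ⟨t, by omega⟩ ⟨t + 1, ht⟩ (v ⟨t, by omega⟩) (v ⟨t + 1, ht⟩)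

/-!
At step `T` the mechanism releases `X_T = b` with probability `minC1 / cond1`, so the joint
probability of releasing `b` together with `X_1 = u` and the history is
`minC1 · P(X_1 = u, history)`, the same multiple for every `u`. By the Markov property, given
`X_T` the value `X_i` (`i > T`) is independent of `X_1` and of the earlier outputs. Hence one step
of the mechanism turns `f(u) = P(X_i = a | X_1 = u, Y_{[T]})` into `(γ f(u) + β) / α` with
`α > 0` and `γ ∈ {0, 1}`: a release makes it constant in `u`, an erasure shifts and rescales it.
Minimizers of `f` therefore survive every step, and the second claim follows by induction
from `T = 0`, where the history plays no role.
-/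

set_option linter.unusedSectionVars false

lemma argmin_div_of_affine {ι : Type*} {A B A' B' : ι → ℝ} {α β γ : ℝ} (hα : 0 < α)
    (hγ : 0 ≤ γ) (hA : ∀ u, A' u = α * A u) (hB : ∀ u, B' u = γ * B u + β * A u)
    {u' : ι} (hu' : 0 < A u' ∧ ∀ u, 0 < A u → B u' / A u' ≤ B u / A u) :
    0 < A' u' ∧ ∀ u, 0 < A' u → B' u' / A' u' ≤ B' u / A' u := by
  have hdiv : ∀ u, 0 < A u → B' u / A' u = (γ * (B u / A u) + β) / α := fun u hu => by
    rw [hA, hB]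
    field_simp
  have hpos : ∀ u, 0 < A' u ↔ 0 < A u := fun u => by rw [hA, mul_pos_iff_of_pos_left hα]
  refine ⟨(hpos u').mpr hu'.1, fun u hu => ?_⟩
  rw [hpos] at hu
  rw [hdiv u' hu'.1, hdiv u hu]
  gcongr (γ * ?_ + β) / α
  exact hu'.2 u hu

lemma ite_le_ite_of_imp {p q : Prop} [Decidable p] [Decidable q] {a : ℝ} (ha : 0 ≤ a)
    (hpq : p → q) : (if p then a else 0) ≤ if q then a else 0 := by
  by_cases hp : p
  · simp [hp, hpq hp]
  · rw [if_neg hp]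
    exact ite_nonneg ha le_rfl

section Markov

variable {n : ℕ}

lemma sum_eq_sum_sum_ite_apply_eq (k : Fin n) (F : (Fin n → X) → ℝ) :
    ∑ x, F x = ∑ b : X, ∑ x : Fin n → X, if x k = b then F x else 0 := by
  rw [Finset.sum_comm]
  simp only [Finset.sum_ite_eq, Finset.mem_univ, if_true]

/-- Each `x` is counted once, through its prefix class, by the representative that equals `c`
from coordinate `s` on. -/
lemma sum_mul_eq_sum_prPre (p : (Fin n → X) → ℝ) (s : ℕ) (c : X) {F : (Fin n → X) → ℝ}
    (hF : DependsOn F {j : Fin n | (j : ℕ) < s}) :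
    ∑ x, F x * p x
      = ∑ v, if ∀ j : Fin n, s ≤ (j : ℕ) → v j = c then F v * prPre p s v else 0 := by
  let trunc : (Fin n → X) → Fin n → X := fun x j => if (j : ℕ) < s then x j else c
  have htrunc : ∀ x v, ((∀ j : Fin n, s ≤ (j : ℕ) → v j = c) ∧
      ∀ j : Fin n, (j : ℕ) < s → x j = v j) ↔ v = trunc x := by
    refine fun x v => ⟨fun ⟨hc, hx⟩ => funext fun j => ?_, ?_⟩
    · by_cases hj : (j : ℕ) < s
      · simp [trunc, hj, hx j hj]
      · simp [trunc, hj, hc j (not_lt.mp hj)]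
    · rintro rfl
      exact ⟨fun j hj => by simp [trunc, not_lt.mpr hj], fun j hj => by simp [trunc, hj]⟩
  simp only [prPre, Finset.mul_sum, mul_ite, mul_zero, Finset.ite_sum_zero, ← ite_and]
  rw [Finset.sum_comm]
  refine Finset.sum_congr rfl fun x _ => ?_
  simp only [htrunc, Finset.sum_ite_eq', Finset.mem_univ, if_true]
  exact congrArg (· * p x) (hF fun j hj => by simp [trunc, show (j : ℕ) < s from hj])

lemma eq_zero_of_prOne_eq_zero {p : (Fin n → X) → ℝ} (hp0 : ∀ x, 0 ≤ p x) {k : Fin n}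
    {m : X} (hm : prOne p k m = 0) {x : Fin n → X} (hx : x k = m) : p x = 0 := by
  have := (Finset.sum_eq_zero_iff_of_nonneg fun y _ => ite_nonneg (hp0 y) le_rfl).mp hm x
    (Finset.mem_univ x)
  simpa [hx] using this

lemma forall_succ_le_apply_eq_and_iff {s : ℕ} (hs : s < n) {v : Fin n → X} {a : X} :
    ((∀ j : Fin n, s + 1 ≤ (j : ℕ) → v j = a) ∧ v ⟨s, hs⟩ = a)
      ↔ ∀ j : Fin n, s ≤ (j : ℕ) → v j = a := by
  refine ⟨fun ⟨hsucc, hs⟩ j hj => ?_, fun h => ⟨fun j hj => h j (by omega), h _ le_rfl⟩⟩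
  rcases (show s = (j : ℕ) ∨ s + 1 ≤ (j : ℕ) by omega) with hj | hj
  · rwa [show j = ⟨s, _⟩ from Fin.ext hj.symm]
  · exact hsucc j hj

lemma IsMarkov.prPre_add_two {p : (Fin n → X) → ℝ} (hM : IsMarkov p) (s : ℕ)
    (hs : s + 1 < n) (v : Fin n → X)
    (hv : prOne p ⟨s, by omega⟩ (v ⟨s, by omega⟩) ≠ 0) :
    prPre p (s + 2) v
      = prTwo p ⟨s, by omega⟩ ⟨s + 1, hs⟩ (v ⟨s, by omega⟩) (v ⟨s + 1, hs⟩)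
          / prOne p ⟨s, by omega⟩ (v ⟨s, by omega⟩) * prPre p (s + 1) v := by
  rw [div_mul_eq_mul_div, eq_div_iff hv, mul_comm _ (prPre p (s + 1) v)]
  exact hM s hs v

lemma IsMarkov.exists_transition {p : (Fin n → X) → ℝ} (hp0 : ∀ x, 0 ≤ p x)
    (hM : IsMarkov p) (s : ℕ) (hs : s + 1 < n) (m a : X) :
    ∃ k : ℝ, ∀ w : (Fin n → X) → ℝ, DependsOn w {j : Fin n | (j : ℕ) < s + 1} →
      ∑ x, (if x ⟨s, by omega⟩ = m ∧ x ⟨s + 1, hs⟩ = a then w x else 0) * p x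
        = k * ∑ x, (if x ⟨s, by omega⟩ = m then w x else 0) * p x := by
  set S : Fin n := ⟨s, by omega⟩
  set S' : Fin n := ⟨s + 1, hs⟩
  by_cases hm : prOne p S m = 0
  · refine ⟨0, fun w _ => ?_⟩
    rw [zero_mul]
    refine Finset.sum_eq_zero fun x _ => ?_
    split_ifs with hx
    · rw [eq_zero_of_prOne_eq_zero hp0 hm hx.1, mul_zero]
    · rw [zero_mul]
  refine ⟨prTwo p S S' m a / prOne p S m, fun w hw => ?_⟩
  have hw₂ : DependsOn (fun x => if x S = m ∧ x S' = a then w x else 0)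
      {j : Fin n | (j : ℕ) < s + 2} := fun x y hxy => by
    simp only [hxy S (show s < s + 2 by omega), hxy S' (show s + 1 < s + 2 by omega),
      hw fun j hj => hxy j (Nat.lt_succ_of_lt hj)]
  have hw₁ : DependsOn (fun x => if x S = m then w x else 0) {j : Fin n | (j : ℕ) < s + 1} :=
    fun x y hxy => by simp only [hxy S (show s < s + 1 by omega), hw hxy]
  rw [sum_mul_eq_sum_prPre p (s + 2) a hw₂, sum_mul_eq_sum_prPre p (s + 1) a hw₁,
    Finset.mul_sum]
  refine Finset.sum_congr rfl fun v _ => ?_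
  have htail := forall_succ_le_apply_eq_and_iff hs (v := v) (a := a)
  by_cases hv : (∀ j : Fin n, s + 1 ≤ (j : ℕ) → v j = a) ∧ v S = m
  · obtain ⟨h₂, h₁⟩ := htail.mpr hv.1
    rw [if_pos h₂, if_pos ⟨hv.2, h₁⟩, if_pos hv.1, if_pos hv.2,
      hM.prPre_add_two s hs v (hv.2 ▸ hm), hv.2, h₁]
    ring
  · rw [not_and_or] at hv
    rcases hv with hv | hv
    · rw [if_neg hv, mul_zero, ite_eq_right_iff]
      intro h₂
      rw [if_neg fun h => hv (htail.mp ⟨h₂, h.2⟩), zero_mul]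
    · simp [hv]

/-- Given `X_t = b`, the event `X_i = a` is independent of `X_{[t+1]}`, for every `i > t`. -/
lemma IsMarkov.exists_cond_indep {p : (Fin n → X) → ℝ} (hp0 : ∀ x, 0 ≤ p x)
    (hM : IsMarkov p) {t i : ℕ} (hti : t < i) (hi : i < n) (b a : X) :
    ∃ q : ℝ, ∀ w : (Fin n → X) → ℝ, DependsOn w {j : Fin n | (j : ℕ) < t + 1} →
      ∑ x, (if x ⟨t, by omega⟩ = b ∧ x ⟨i, hi⟩ = a then w x else 0) * p x
        = q * ∑ x, (if x ⟨t, by omega⟩ = b then w x else 0) * p x := by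
  induction i, hti using Nat.le_induction generalizing a with
  | base => exact hM.exists_transition hp0 t hi b a
  | succ i hti ih =>
    set T : Fin n := ⟨t, by omega⟩
    choose q hq using fun m => ih (by omega) m
    choose k hk using fun m => hM.exists_transition hp0 i hi m a
    refine ⟨∑ m, k m * q m, fun w hw => ?_⟩
    have hwT : DependsOn (fun x => if x T = b then w x else 0)
        {j : Fin n | (j : ℕ) < i + 1} := fun x y hxy => by
      simp only [hxy T (show t < i + 1 by omega),
        hw fun j hj => hxy j (show (j : ℕ) < i + 1 from lt_of_lt_of_le hj (by omega))]
    calc ∑ x, (if x T = b ∧ x ⟨i + 1, hi⟩ = a then w x else 0) * p x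
        = ∑ m, ∑ x, (if x ⟨i, by omega⟩ = m ∧ x ⟨i + 1, hi⟩ = a then
            (if x T = b then w x else 0) else 0) * p x := by
          rw [sum_eq_sum_sum_ite_apply_eq ⟨i, by omega⟩]
          refine Finset.sum_congr rfl fun m _ => Finset.sum_congr rfl fun x _ => ?_
          by_cases h₁ : x T = b <;> by_cases h₂ : x ⟨i, by omega⟩ = m <;> simp [h₁, h₂]
      _ = ∑ m, k m * ∑ x, (if x T = b ∧ x ⟨i, by omega⟩ = m then w x else 0) * p x := by
          refine Finset.sum_congr rfl fun m _ => ?_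
          rw [hk m _ hwT]
          congr 1
          refine Finset.sum_congr rfl fun x _ => ?_
          by_cases h₁ : x T = b <;> simp [h₁]
      _ = (∑ m, k m * q m) * ∑ x, (if x T = b then w x else 0) * p x := by
          rw [Finset.sum_mul]
          exact Finset.sum_congr rfl fun m _ => by rw [hq m w hw, mul_assoc]

end Markov

section Mechanism

variable {n : ℕ} {J : (Fin n → X) → (Fin n → Option X) → ℝ}

@[simp] lemma agreeN_zero (y h : Fin n → Option X) : agreeN 0 y h :=
  fun _ hj => absurd hj (Nat.not_lt_zero _)

lemma agreeN.of_succ {t : ℕ} {y h : Fin n → Option X} (hy : agreeN (t + 1) y h) :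
    agreeN t y h :=
  fun j hj => hy j (Nat.lt_succ_of_lt hj)

lemma agreeN_succ_iff (T : Fin n) {y h : Fin n → Option X} :
    agreeN (T + 1) y h ↔ y T = h T ∧ agreeN T y h := by
  refine ⟨fun hy => ⟨hy T (Nat.lt_succ_self T), hy.of_succ⟩, fun ⟨hT, hy⟩ j hj => ?_⟩
  rcases Nat.lt_succ_iff_lt_or_eq.mp hj with hj | hj
  · exact hy j hj
  · rwa [Fin.ext hj]

lemma prXH_nonneg (hJ0 : ∀ x y, 0 ≤ J x y) (t : ℕ) (x : Fin n → X)
    (h : Fin n → Option X) : 0 ≤ prXH J t x h :=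
  Finset.sum_nonneg fun y _ => ite_nonneg (hJ0 x y) le_rfl

lemma prXHY_nonneg (hJ0 : ∀ x y, 0 ≤ J x y) (t : ℕ) (x : Fin n → X) (h : Fin n → Option X)
    (i : Fin n) (o : Option X) : 0 ≤ prXHY J t x h i o :=
  Finset.sum_nonneg fun y _ => ite_nonneg (hJ0 x y) le_rfl

lemma prXHY_le_prXH (hJ0 : ∀ x y, 0 ≤ J x y) (t : ℕ) (x : Fin n → X)
    (h : Fin n → Option X) (i : Fin n) (o : Option X) : prXHY J t x h i o ≤ prXH J t x h :=
  Finset.sum_le_sum fun y _ => ite_le_ite_of_imp (hJ0 x y) And.right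

lemma prXH_zero {p : (Fin n → X) → ℝ} (hJp : ∀ x, ∑ y, J x y = p x) (x : Fin n → X)
    (h : Fin n → Option X) : prXH J 0 x h = p x := by
  simp [prXH, hJp]

lemma prXH_succ_eq_prXHY (T : Fin n) (x : Fin n → X) (h : Fin n → Option X) :
    prXH J (T + 1) x h = prXHY J T x h T (h T) := by
  simp only [prXH, prXHY, agreeN_succ_iff]

lemma prXHY_some_eq_zero (hJ0 : ∀ x y, 0 ≤ J x y)
    (hsupp : ∀ x y, 0 < J x y → ∀ i, y i = some (x i) ∨ y i = none)
    (t : ℕ) (x : Fin n → X) (h : Fin n → Option X) (i : Fin n) {b : X} (hb : b ≠ x i) :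
    prXHY J t x h i (some b) = 0 := by
  refine Finset.sum_eq_zero fun y _ => ?_
  split_ifs with hy
  · refine ((hJ0 x y).eq_or_lt.resolve_right fun hpos => ?_).symm
    rcases hsupp x y hpos i with hi | hi <;> simp_all
  · rfl

lemma prXHY_none (hJ0 : ∀ x y, 0 ≤ J x y)
    (hsupp : ∀ x y, 0 < J x y → ∀ i, y i = some (x i) ∨ y i = none)
    (t : ℕ) (x : Fin n → X) (h : Fin n → Option X) (i : Fin n) :
    prXHY J t x h i none = prXH J t x h - prXHY J t x h i (some (x i)) := by
  rw [prXH, prXHY, prXHY, ← Finset.sum_sub_distrib]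
  refine Finset.sum_congr rfl fun y _ => ?_
  rcases (hJ0 x y).eq_or_lt with hzero | hpos
  · simp [← hzero]
  · rcases hsupp x y hpos i with hi | hi <;> simp [hi]

def releaseProb (J : (Fin n → X) → (Fin n → Option X) → ℝ) (i₀ T : Fin n)
    (h : Fin n → Option X) (b u : X) : ℝ :=
  minC1 J i₀ T T b h / cond1 J i₀ T T b u h

/-- The probability that the mechanism outputs `h T` at step `T` when `X_T = b` and
`X_{i₀} = u`. -/
def outputProb (J : (Fin n → X) → (Fin n → Option X) → ℝ) (i₀ T : Fin n)
    (h : Fin n → Option X) (b u : X) : ℝ :=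
  match h T with
  | some b' => if b = b' then releaseProb J i₀ T h b u else 0
  | none => 1 - releaseProb J i₀ T h b u

lemma prXH_succ {p : (Fin n → X) → ℝ} {i₀ : Fin n} (hJ : IsSequentialMechanism1 p i₀ J)
    (T : Fin n) (x : Fin n → X) (h : Fin n → Option X) :
    prXH J (T + 1) x h = outputProb J i₀ T h (x T) (x i₀) * prXH J T x h := by
  obtain ⟨hJ0, -, hsupp, hrelease⟩ := hJ
  rw [prXH_succ_eq_prXHY]
  rcases (prXH_nonneg hJ0 T x h).eq_or_lt with hzero | hpos
  · rw [← hzero, mul_zero]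
    exact le_antisymm (hzero ▸ prXHY_le_prXH hJ0 T x h T _) (prXHY_nonneg hJ0 T x h T _)
  have hrel := hrelease T x h hpos
  rcases hT : h T with _ | b
  · rw [prXHY_none hJ0 hsupp, hrel]
    simp only [outputProb, hT, releaseProb]
    ring
  · by_cases hb : x T = b
    · subst hb
      simp only [outputProb, hT, if_true, hrel, releaseProb]
    · rw [prXHY_some_eq_zero hJ0 hsupp T x h T (Ne.symm hb)]
      simp only [outputProb, hT, if_neg hb, zero_mul]

lemma exists_prXH_eq_mul {p : (Fin n → X) → ℝ} {i₀ : Fin n}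
    (hJ : IsSequentialMechanism1 p i₀ J) (h : Fin n → Option X) :
    ∀ t ≤ n, ∃ W : (Fin n → X) → ℝ,
      DependsOn W (insert i₀ {j : Fin n | (j : ℕ) < t}) ∧ ∀ x, prXH J t x h = p x * W x
  | 0, _ => ⟨fun _ => 1, fun _ _ _ => rfl, fun x => by rw [prXH_zero hJ.2.1, mul_one]⟩
  | t + 1, ht => by
    obtain ⟨W, hWdep, hW⟩ := exists_prXH_eq_mul hJ h t (by omega)
    let T : Fin n := ⟨t, by omega⟩
    refine ⟨fun x => outputProb J i₀ T h (x T) (x i₀) * W x, fun x y hxy => ?_, fun x => ?_⟩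
    · have hprev : ∀ j ∈ insert i₀ {j : Fin n | (j : ℕ) < t}, x j = y j := fun j hj =>
        hxy j (Set.insert_subset_insert (fun _ hj => Nat.lt_succ_of_lt hj) hj)
      simp only [hxy T (Set.mem_insert_of_mem _ (Nat.lt_succ_self t)),
        hxy i₀ (Set.mem_insert _ _), hWdep hprev]
    · rw [show t + 1 = (T : ℕ) + 1 from rfl, prXH_succ hJ, hW]
      ring

/-- `P(S(X), Y_{[t]} = h_{[t]})` under the joint law `J`. -/
def prEvH (J : (Fin n → X) → (Fin n → Option X) → ℝ) (t : ℕ) (h : Fin n → Option X)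
    (S : (Fin n → X) → Prop) [DecidablePred S] : ℝ :=
  ∑ x, if S x then prXH J t x h else 0

lemma pr1H_eq_prEvH (i₀ : Fin n) (t : ℕ) (u : X) (h : Fin n → Option X) :
    pr1H J i₀ t u h = prEvH J t h (fun x => x i₀ = u) := by
  simp only [pr1H, prEvH, prXH, ite_and, Finset.ite_sum_zero]

lemma prI1H_eq_prEvH (i₀ : Fin n) (t : ℕ) (i : Fin n) (a u : X) (h : Fin n → Option X) :
    prI1H J i₀ t i a u h = prEvH J t h (fun x => x i = a ∧ x i₀ = u) := by
  simp only [prI1H, prEvH, prXH, ite_and, Finset.ite_sum_zero]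

lemma prEvH_eq_sum_apply_eq (k : Fin n) (t : ℕ) (h : Fin n → Option X)
    (S : (Fin n → X) → Prop) [DecidablePred S] :
    prEvH J t h S = ∑ b, prEvH J t h (fun x => x k = b ∧ S x) := by
  rw [prEvH, sum_eq_sum_sum_ite_apply_eq k]
  simp only [prEvH, ite_and]

lemma prH_eq_sum_pr1H (i₀ : Fin n) (t : ℕ) (h : Fin n → Option X) :
    prH J t h = ∑ u, pr1H J i₀ t u h := by
  calc prH J t h = prEvH J t h (fun _ => True) := by simp [prH, prEvH]
    _ = ∑ u, pr1H J i₀ t u h := by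
      rw [prEvH_eq_sum_apply_eq i₀]
      simp only [and_true, pr1H_eq_prEvH]

lemma pr1H_nonneg (hJ0 : ∀ x y, 0 ≤ J x y) (i₀ : Fin n) (t : ℕ) (u : X)
    (h : Fin n → Option X) : 0 ≤ pr1H J i₀ t u h :=
  Finset.sum_nonneg fun _ _ => Finset.sum_nonneg fun y _ => ite_nonneg (hJ0 _ y) le_rfl

lemma prI1H_nonneg (hJ0 : ∀ x y, 0 ≤ J x y) (i₀ : Fin n) (t : ℕ) (i : Fin n) (a u : X)
    (h : Fin n → Option X) : 0 ≤ prI1H J i₀ t i a u h :=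
  Finset.sum_nonneg fun _ _ => Finset.sum_nonneg fun y _ => ite_nonneg (hJ0 _ y) le_rfl

lemma prI1H_le_pr1H (hJ0 : ∀ x y, 0 ≤ J x y) (i₀ : Fin n) (t : ℕ) (i : Fin n) (a u : X)
    (h : Fin n → Option X) : prI1H J i₀ t i a u h ≤ pr1H J i₀ t u h :=
  Finset.sum_le_sum fun _ _ => Finset.sum_le_sum fun y _ => ite_le_ite_of_imp (hJ0 _ y) And.right

lemma prH_succ_le (hJ0 : ∀ x y, 0 ≤ J x y) (t : ℕ) (h : Fin n → Option X) :
    prH J (t + 1) h ≤ prH J t h :=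
  Finset.sum_le_sum fun x _ => Finset.sum_le_sum fun y _ =>
    ite_le_ite_of_imp (hJ0 x y) agreeN.of_succ

lemma minC1_nonneg (hJ0 : ∀ x y, 0 ≤ J x y) (i₀ : Fin n) (t : ℕ) (i : Fin n) (a : X)
    (h : Fin n → Option X) : 0 ≤ minC1 J i₀ t i a h :=
  Real.sInf_nonneg <| by
    rintro r ⟨u, -, rfl⟩
    exact div_nonneg (prI1H_nonneg hJ0 i₀ t i a u h) (pr1H_nonneg hJ0 i₀ t u h)

lemma minC1_le_cond1 (hJ0 : ∀ x y, 0 ≤ J x y) (i₀ : Fin n) (t : ℕ) (i : Fin n) (a : X)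
    {u : X} {h : Fin n → Option X} (hu : 0 < pr1H J i₀ t u h) :
    minC1 J i₀ t i a h ≤ cond1 J i₀ t i a u h := by
  refine csInf_le ⟨0, ?_⟩ ⟨u, hu, rfl⟩
  rintro r ⟨v, -, rfl⟩
  exact div_nonneg (prI1H_nonneg hJ0 i₀ t i a v h) (pr1H_nonneg hJ0 i₀ t v h)

lemma releaseProb_mul_prI1H (hJ0 : ∀ x y, 0 ≤ J x y) (i₀ T : Fin n) (h : Fin n → Option X)
    (b u : X) :
    releaseProb J i₀ T h b u * prI1H J i₀ T T b u h
      = minC1 J i₀ T T b h * pr1H J i₀ T u h := by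
  rcases (pr1H_nonneg hJ0 i₀ T u h).eq_or_lt with hu | hu
  · have hbu : prI1H J i₀ T T b u h = 0 :=
      le_antisymm (hu ▸ prI1H_le_pr1H hJ0 i₀ T T b u h) (prI1H_nonneg hJ0 i₀ T T b u h)
    rw [hbu, ← hu, mul_zero, mul_zero]
  rcases (prI1H_nonneg hJ0 i₀ T T b u h).eq_or_lt with hbu | hbu
  · have hmin : minC1 J i₀ T T b h = 0 := by
      refine le_antisymm ?_ (minC1_nonneg hJ0 i₀ T T b h)
      simpa [cond1, ← hbu] using minC1_le_cond1 hJ0 i₀ T T b hu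
    rw [← hbu, hmin, mul_zero, zero_mul]
  rw [releaseProb, cond1]
  field_simp

lemma exists_outputProb_mul_prI1H (hJ0 : ∀ x y, 0 ≤ J x y) (i₀ T : Fin n)
    (h : Fin n → Option X) :
    ∃ δ ≥ (0 : ℝ), ∃ ε : X → ℝ, ∀ b u,
      outputProb J i₀ T h b u * prI1H J i₀ T T b u h
      = δ * prI1H J i₀ T T b u h + ε b * pr1H J i₀ T u h := by
  rcases hT : h T with _ | b₀
  · refine ⟨1, zero_le_one, fun b => -minC1 J i₀ T T b h, fun b u => ?_⟩
    simp only [outputProb, hT]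
    linear_combination -releaseProb_mul_prI1H hJ0 i₀ T h b u
  · refine ⟨0, le_rfl, fun b => if b = b₀ then minC1 J i₀ T T b h else 0, fun b u => ?_⟩
    by_cases hb : b = b₀
    · simp only [outputProb, hT, if_pos hb, zero_mul, zero_add, releaseProb_mul_prI1H hJ0]
    · simp only [outputProb, hT, if_neg hb, zero_mul, zero_add]

lemma exists_prEvH_eq_mul_prI1H {p : (Fin n → X) → ℝ} (hp0 : ∀ x, 0 ≤ p x)
    (hM : IsMarkov p) {i₀ : Fin n} (hJ : IsSequentialMechanism1 p i₀ J) {T i : Fin n}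
    (hi₀ : i₀ ≤ T) (hTi : T < i) (h : Fin n → Option X) (b a : X) :
    ∃ q : ℝ, ∀ u, prEvH J T h (fun x => x T = b ∧ x i = a ∧ x i₀ = u)
      = q * prI1H J i₀ T T b u h := by
  obtain ⟨W, hWdep, hW⟩ := exists_prXH_eq_mul hJ h T T.isLt.le
  obtain ⟨q, hq⟩ := hM.exists_cond_indep hp0 hTi i.isLt b a
  refine ⟨q, fun u => ?_⟩
  have hw : DependsOn (fun x => if x i₀ = u then W x else 0)
      {j : Fin n | (j : ℕ) < T + 1} := fun x y hxy => by
    have hi₀' : (i₀ : ℕ) < T + 1 := Nat.lt_succ_of_le hi₀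
    dsimp only
    rw [hxy i₀ hi₀', hWdep fun j hj => hxy j ?_]
    rcases hj with rfl | hj
    exacts [hi₀', Nat.lt_succ_of_lt hj]
  have := hq _ hw
  simp only [Fin.eta] at this
  rw [prI1H_eq_prEvH]
  simp only [prEvH, hW]
  convert this using 1
  · refine Finset.sum_congr rfl fun x _ => ?_
    by_cases hu : x i₀ = u <;> simp [hu, mul_comm]
  · congr 1
    refine Finset.sum_congr rfl fun x _ => ?_
    by_cases hu : x i₀ = u <;> simp [hu, mul_comm]

lemma prEvH_succ_eq_sum {p : (Fin n → X) → ℝ} {i₀ : Fin n}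
    (hJ : IsSequentialMechanism1 p i₀ J) (T : Fin n) (h : Fin n → Option X) {u : X}
    {R : (Fin n → X) → Prop} [DecidablePred R] (hR : ∀ x, R x → x i₀ = u) :
    prEvH J (T + 1) h R
      = ∑ b, outputProb J i₀ T h b u * prEvH J T h (fun x => x T = b ∧ R x) := by
  simp only [prEvH, prXH_succ hJ, Finset.mul_sum]
  rw [sum_eq_sum_sum_ite_apply_eq T]
  refine Finset.sum_congr rfl fun b _ => Finset.sum_congr rfl fun x _ => ?_
  by_cases hb : x T = b <;> by_cases hx : R x <;> simp [hb, hx, hR x]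

lemma prEvH_succ {p : (Fin n → X) → ℝ} {i₀ : Fin n} (hJ : IsSequentialMechanism1 p i₀ J)
    {T : Fin n} {h : Fin n → Option X} {δ : ℝ} {ε : X → ℝ}
    (hδε : ∀ b u, outputProb J i₀ T h b u * prI1H J i₀ T T b u h
      = δ * prI1H J i₀ T T b u h + ε b * pr1H J i₀ T u h)
    {u : X} {R : (Fin n → X) → Prop} [DecidablePred R] (hR : ∀ x, R x → x i₀ = u)
    {q : X → ℝ}
    (hq : ∀ b, prEvH J T h (fun x => x T = b ∧ R x) = q b * prI1H J i₀ T T b u h) :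
    prEvH J (T + 1) h R = δ * prEvH J T h R + (∑ b, q b * ε b) * pr1H J i₀ T u h := by
  calc prEvH J (T + 1) h R
      = ∑ b, q b * (outputProb J i₀ T h b u * prI1H J i₀ T T b u h) := by
        rw [prEvH_succ_eq_sum hJ T h hR]
        exact Finset.sum_congr rfl fun b _ => by rw [hq]; ring
    _ = δ * ∑ b, prEvH J T h (fun x => x T = b ∧ R x)
          + (∑ b, q b * ε b) * pr1H J i₀ T u h := by
        simp only [hδε, hq, Finset.mul_sum, Finset.sum_mul, ← Finset.sum_add_distrib]
        exact Finset.sum_congr rfl fun b _ => by ring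
    _ = δ * prEvH J T h R + (∑ b, q b * ε b) * pr1H J i₀ T u h := by
        rw [← prEvH_eq_sum_apply_eq]

def IsCondArgmin (J : (Fin n → X) → (Fin n → Option X) → ℝ) (i₀ : Fin n) (t : ℕ)
    (i : Fin n) (a : X) (h : Fin n → Option X) (u' : X) : Prop :=
  0 < pr1H J i₀ t u' h ∧
    ∀ u, 0 < pr1H J i₀ t u h → cond1 J i₀ t i a u' h ≤ cond1 J i₀ t i a u h

theorem IsCondArgmin.succ {p : (Fin n → X) → ℝ} (hp0 : ∀ x, 0 ≤ p x) (hM : IsMarkov p)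
    {i₀ : Fin n} (hJ : IsSequentialMechanism1 p i₀ J) {T i : Fin n} (hi₀ : i₀ ≤ T)
    (hTi : T < i) {a : X} {h : Fin n → Option X} (hpos : 0 < prH J (T + 1) h) {u' : X}
    (hu' : IsCondArgmin J i₀ T i a h u') : IsCondArgmin J i₀ (T + 1) i a h u' := by
  obtain ⟨δ, hδ, ε, hδε⟩ := exists_outputProb_mul_prI1H hJ.1 i₀ T h
  choose q hq using fun b => exists_prEvH_eq_mul_prI1H hp0 hM hJ hi₀ hTi h b a
  have hA : ∀ u, pr1H J i₀ (T + 1) u h = (δ + ∑ b, ε b) * pr1H J i₀ T u h := fun u => by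
    have := prEvH_succ hJ hδε (R := fun x => x i₀ = u) (fun _ => id) (q := fun _ => 1)
      (fun b => by rw [one_mul, prI1H_eq_prEvH])
    simp only [← pr1H_eq_prEvH, one_mul] at this
    rw [this]
    ring
  have hB : ∀ u, prI1H J i₀ (T + 1) i a u h
      = δ * prI1H J i₀ T i a u h + (∑ b, q b * ε b) * pr1H J i₀ T u h := fun u => by
    simpa only [← prI1H_eq_prEvH] using
      prEvH_succ hJ hδε (R := fun x => x i = a ∧ x i₀ = u) (fun _ => And.right) (hq · u)
  have hα : 0 < δ + ∑ b, ε b := by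
    have hsum : prH J (T + 1) h = (δ + ∑ b, ε b) * prH J T h := by
      simp only [prH_eq_sum_pr1H i₀, hA, Finset.mul_sum]
    rw [hsum] at hpos
    exact pos_of_mul_pos_left hpos (Finset.sum_nonneg fun x _ => prXH_nonneg hJ.1 T x h)
  exact argmin_div_of_affine hα hδ hA hB hu'

lemma isCondArgmin_zero_iff (J : (Fin n → X) → (Fin n → Option X) → ℝ) (i₀ i : Fin n)
    (a : X) (h h' : Fin n → Option X) (u : X) :
    IsCondArgmin J i₀ 0 i a h u ↔ IsCondArgmin J i₀ 0 i a h' u := by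
  simp only [IsCondArgmin, cond1, pr1H, prI1H, agreeN_zero, and_true]

lemma exists_isCondArgmin_zero {p : (Fin n → X) → ℝ} {i₀ : Fin n}
    (hJ : IsSequentialMechanism1 p i₀ J) (hp1 : ∑ x, p x = 1) (i : Fin n) (a : X)
    (h : Fin n → Option X) : ∃ u', IsCondArgmin J i₀ 0 i a h u' := by
  have hsupp : (univ.filter fun u => 0 < pr1H J i₀ 0 u h).Nonempty := by
    by_contra! hempty
    have hprH : prH J 0 h ≤ 0 := by
      rw [prH_eq_sum_pr1H i₀]
      exact Finset.sum_nonpos fun u _ => not_lt.mp fun hu =>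
        Finset.eq_empty_iff_forall_notMem.mp hempty u (by simpa using hu)
    norm_num [prH, prXH_zero hJ.2.1, hp1] at hprH
  obtain ⟨u', hu', hmin⟩ := Finset.exists_min_image _ (fun u => cond1 J i₀ 0 i a u h) hsupp
  exact ⟨u', by simpa using hu', fun u hu => hmin u (by simpa using hu)⟩

theorem IsCondArgmin.of_zero {p : (Fin n → X) → ℝ} (hp0 : ∀ x, 0 ≤ p x) (hM : IsMarkov p)
    (hn : 1 ≤ n) (hJ : IsSequentialMechanism1 p ⟨0, hn⟩ J) {i : Fin n} {a u' : X}
    (hu' : ∀ h, IsCondArgmin J ⟨0, hn⟩ 0 i a h u') :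
    ∀ t ≤ (i : ℕ), ∀ h, 0 < prH J t h → IsCondArgmin J ⟨0, hn⟩ t i a h u'
  | 0, _, h, _ => hu' h
  | t + 1, hti, h, hpos =>
    IsCondArgmin.succ (T := ⟨t, by omega⟩) hp0 hM hJ (Nat.zero_le t) hti hpos <|
      of_zero hp0 hM hn hJ hu' t (by omega) h (hpos.trans_le (prH_succ_le hJ.1 t h))

end Mechanism

theorem markov_argmin_preserved_general {n : ℕ} (hn : 1 ≤ n)
    (p : (Fin n → X) → ℝ) (hp1 : ∑ x : Fin n → X, p x = 1)
    (hMarkov : IsMarkov p)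
    (J : (Fin n → X) → (Fin n → Option X) → ℝ)
    (hJ : IsSequentialMechanism1 p ⟨0, hn⟩ J) :
    (∀ (i : Fin n) (a : X) (t : ℕ), t < (i : ℕ) →
      ∀ h : Fin n → Option X, 0 < prH J (t + 1) h →
      ∀ u' : X,
        (0 < pr1H J ⟨0, hn⟩ t u' h ∧
          ∀ u : X, 0 < pr1H J ⟨0, hn⟩ t u h →
            cond1 J ⟨0, hn⟩ t i a u' h ≤ cond1 J ⟨0, hn⟩ t i a u h) →
        (0 < pr1H J ⟨0, hn⟩ (t + 1) u' h ∧
          ∀ u : X, 0 < pr1H J ⟨0, hn⟩ (t + 1) u h →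
            cond1 J ⟨0, hn⟩ (t + 1) i a u' h ≤ cond1 J ⟨0, hn⟩ (t + 1) i a u h)) ∧
    (∀ (i : Fin n) (a : X), ∃ u' : X,
      (0 < pr1H J ⟨0, hn⟩ 0 u' (fun _ => (none : Option X)) ∧
        ∀ u : X, 0 < pr1H J ⟨0, hn⟩ 0 u (fun _ => (none : Option X)) →
          cond1 J ⟨0, hn⟩ 0 i a u' (fun _ => (none : Option X)) ≤ cond1 J ⟨0, hn⟩ 0 i a u (fun _ => (none : Option X))) ∧
      ∀ h : Fin n → Option X, 0 < prH J (i : ℕ) h →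
        (0 < pr1H J ⟨0, hn⟩ (i : ℕ) u' h ∧
          ∀ u : X, 0 < pr1H J ⟨0, hn⟩ (i : ℕ) u h →
            cond1 J ⟨0, hn⟩ (i : ℕ) i a u' h ≤ cond1 J ⟨0, hn⟩ (i : ℕ) i a u h)) := by
  have hp0 : ∀ x, 0 ≤ p x := fun x => hJ.2.1 x ▸ Finset.sum_nonneg fun y _ => hJ.1 x y
  refine ⟨fun i a t hti h hpos u' hu' => ?_, fun i a => ?_⟩
  · exact IsCondArgmin.succ (T := ⟨t, hti.trans i.isLt⟩) hp0 hMarkov hJ (Nat.zero_le t) hti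
      hpos hu'
  · obtain ⟨u', hu'⟩ := exists_isCondArgmin_zero hJ hp1 i a fun _ => none
    refine ⟨u', hu', fun h hpos => ?_⟩
    exact IsCondArgmin.of_zero hp0 hMarkov hn hJ (fun h => (isCondArgmin_zero_iff ..).mp hu')
      i le_rfl h hpos

/-- argmin-preservation lemma for Markov chains: suppose `X_1, …, X_n` is a
Markov chain, the single sensitive position is `i₀ = 0` (i.e. `K = {1}`, one-based), and
`Y` is generated by the sequential privacy mechanism.  Then for every `i`, every `a`,
every `t < i` and every history `h` with `P(Y_{[t+1]} = h_{[t+1]}) > 0`: any `u*`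
minimizing `u ↦ P(X_i = a | X_1 = u, Y_{[t]} = h_{[t]})` over the `u` of positive
probability also minimizes `u ↦ P(X_i = a | X_1 = u, Y_{[t+1]} = h_{[t+1]})`.
In particular, for every `i` and `a` the unconditional minimum
`min_u P(X_i = a | X_1 = u)` is attained at some `u*` which also attains
`min_u P(X_i = a | X_1 = u, Y_{[i-1]} = h)` for every positive-probability history. -/
theorem markov_argmin_preserved {n : ℕ} (hn : 1 ≤ n) (hX : 2 ≤ Fintype.card X)
    (p : (Fin n → X) → ℝ) (hp0 : ∀ x, 0 ≤ p x) (hp1 : ∑ x : Fin n → X, p x = 1)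
    (hMarkov : IsMarkov p)
    (J : (Fin n → X) → (Fin n → Option X) → ℝ)
    (hJ : IsSequentialMechanism1 p ⟨0, hn⟩ J) :
    (∀ (i : Fin n) (a : X) (t : ℕ), t < (i : ℕ) →
      ∀ h : Fin n → Option X, 0 < prH J (t + 1) h →
      ∀ u' : X,
        (0 < pr1H J ⟨0, hn⟩ t u' h ∧
          ∀ u : X, 0 < pr1H J ⟨0, hn⟩ t u h →
            cond1 J ⟨0, hn⟩ t i a u' h ≤ cond1 J ⟨0, hn⟩ t i a u h) →
        (0 < pr1H J ⟨0, hn⟩ (t + 1) u' h ∧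
          ∀ u : X, 0 < pr1H J ⟨0, hn⟩ (t + 1) u h →
            cond1 J ⟨0, hn⟩ (t + 1) i a u' h ≤ cond1 J ⟨0, hn⟩ (t + 1) i a u h)) ∧
    (∀ (i : Fin n) (a : X), ∃ u' : X,
      (0 < pr1H J ⟨0, hn⟩ 0 u' (fun _ => (none : Option X)) ∧
        ∀ u : X, 0 < pr1H J ⟨0, hn⟩ 0 u (fun _ => (none : Option X)) →
          cond1 J ⟨0, hn⟩ 0 i a u' (fun _ => (none : Option X)) ≤ cond1 J ⟨0, hn⟩ 0 i a u (fun _ => (none : Option X))) ∧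
      ∀ h : Fin n → Option X, 0 < prH J (i : ℕ) h →
        (0 < pr1H J ⟨0, hn⟩ (i : ℕ) u' h ∧
          ∀ u : X, 0 < pr1H J ⟨0, hn⟩ (i : ℕ) u h →
            cond1 J ⟨0, hn⟩ (i : ℕ) i a u' h ≤ cond1 J ⟨0, hn⟩ (i : ℕ) i a u h)) :=
  markov_argmin_preserved_general hn p hp1 hMarkov J hJ

end GenotypeHiding
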